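/- Let Σ̂ be an n×n real symmetric positive definite matrix and δ ∈ ℝ. Let λ > 0 and X be an n×n real symmetric matrix with Σ̂⁻¹ + λ⁻¹X ≻ 0, and set R := (Σ̂⁻¹ + λ⁻¹X)⁻¹. Then for every δλ ∈ ℝ and every n×n real symmetric matrix δX, the function g(t) := F(λ + t·δλ, X + t·δX) is defined for all t in a neighborhood of 0 and is twice differentiable at 0, with g''(0) = λ⁻¹·tr(R·δX·R·δX) − 2λ⁻²·δλ·tr(R·δX·R·X) + λ⁻³·δλ²·tr(R·X·R·X). -/

import Mathlib

/-!
Along the line `t ↦ (λ + t δλ, X + t δX)` one has `λₜ (Ŝ⁻¹ + λₜ⁻¹ Xₜ) = B₀ + t B₁` with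
`B₀ = λ Ŝ⁻¹ + X` and `B₁ = δλ Ŝ⁻¹ + δX`, which is affine in `t`, so
`g t = -λₜ (log det (B₀ + t B₁) - n log λₜ + log det Ŝ - δ)`. Positive definiteness of `B₀ + t B₁`
persists near `t = 0` because positivity of a quadratic form on the compact unit sphere is an open
condition. Jacobi's formula gives `(log det (B₀ + t B₁))' = tr ((B₀ + t B₁)⁻¹ B₁)`, whose derivative
at `0` is `-tr (B₀⁻¹ B₁ B₀⁻¹ B₁)`. Writing `B₀ = λ R⁻¹` and `B₁ = δλ R⁻¹ + D` with
`D = δX - (δλ / λ) X`, all terms carrying a bare `δλ` cancel and `g''(0) = λ⁻¹ tr (R D R D)`.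
-/

/-- `F(λ,X) := −λ(log det(Ŝ⁻¹ + λ⁻¹X) + log det Ŝ − δ)`. -/
noncomputable def Fobj {n : ℕ} (S : Matrix (Fin n) (Fin n) ℝ) (δ : ℝ)
    (l : ℝ) (X : Matrix (Fin n) (Fin n) ℝ) : ℝ :=
  -(l * (Real.log ((S⁻¹ + l⁻¹ • X).det) + Real.log S.det - δ))

open Matrix Polynomial Filter Topology

theorem add_inv_smul_eq_inv_smul_line {m K : Type*} [Field K] (P X dX : Matrix m m K) {l dl t : K}
    (hμ : l + t * dl ≠ 0) :
    P + (l + t * dl)⁻¹ • (X + t • dX) = (l + t * dl)⁻¹ • ((l • P + X) + t • (dl • P + dX)) := by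
  rw [show (l • P + X) + t • (dl • P + dX) = (l + t * dl) • P + (X + t • dX) by module,
    smul_add _ (_ • P), smul_smul, inv_mul_cancel₀ hμ, one_smul]

variable {m : Type*} [Fintype m]

theorem Matrix.PosDef.eventually_posDef_of_isHermitian {A : Matrix m m ℝ} (hA : A.PosDef) :
    ∀ᶠ M in 𝓝 A, M.IsHermitian → M.PosDef := by
  have hq : Continuous fun p : Matrix m m ℝ × (m → ℝ) => p.2 ⬝ᵥ p.1 *ᵥ p.2 := by fun_prop
  have hsphere : ∀ᶠ M in 𝓝 A, ∀ x ∈ Metric.sphere (0 : m → ℝ) 1, 0 < x ⬝ᵥ M *ᵥ x :=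
    (isCompact_sphere 0 1).eventually_forall_of_forall_eventually fun x hx =>
      continuousAt_const.eventually_lt hq.continuousAt
        (by simpa using hA.dotProduct_mulVec_pos (ne_zero_of_mem_sphere one_ne_zero ⟨x, hx⟩))
  filter_upwards [hsphere] with M hM hMH
  refine PosDef.of_dotProduct_mulVec_pos hMH fun x hx => ?_
  have hnx : 0 < ‖x‖⁻¹ := inv_pos.mpr (norm_pos_iff.mpr hx)
  have hunit := hM (‖x‖⁻¹ • x) (by simp [norm_smul, hx])
  rw [mulVec_smul, dotProduct_smul, smul_dotProduct, smul_eq_mul, smul_eq_mul] at hunit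
  simpa using pos_of_mul_pos_right (pos_of_mul_pos_right hunit hnx.le) hnx.le

theorem Matrix.PosDef.eventually_add_smul {A B : Matrix m m ℝ} (hA : A.PosDef)
    (hB : B.IsHermitian) : ∀ᶠ t in 𝓝 (0 : ℝ), (A + t • B).PosDef := by
  have hline : Tendsto (fun t : ℝ => A + t • B) (𝓝 0) (𝓝 A) :=
    Continuous.tendsto' (by fun_prop) _ _ (by simp)
  filter_upwards [hline.eventually hA.eventually_posDef_of_isHermitian] with t ht
  exact ht (hA.isHermitian.add (hB.smul (IsSelfAdjoint.all t)))

theorem trace_mul_sub_smul_mul_sub_smul {α : Type*} [CommRing α] (R Y Z : Matrix m m α) (a : α) :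
    (R * (Y - a • Z) * R * (Y - a • Z)).trace
      = (R * Y * R * Y).trace - 2 * a * (R * Y * R * Z).trace + a ^ 2 * (R * Z * R * Z).trace := by
  have hcycle : (R * Z * R * Y).trace = (R * Y * R * Z).trace := by
    simpa only [Matrix.mul_assoc] using trace_mul_comm (R * Z) (R * Y)
  simp only [Matrix.mul_sub, Matrix.sub_mul, Matrix.mul_smul, Matrix.smul_mul, trace_sub,
    trace_smul, smul_eq_mul, hcycle]
  ring

variable [DecidableEq m]

theorem hasDerivAt_det_one_add_smul {𝕜 : Type*} [NontriviallyNormedField 𝕜] (M : Matrix m m 𝕜) :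
    HasDerivAt (fun r : 𝕜 => (1 + r • M).det) M.trace 0 := by
  have h := (det (1 + (X : 𝕜[X]) • M.map C)).hasDerivAt 0
  rw [derivative_det_one_add_X_smul] at h
  convert h using 2 with r
  rw [eval_det]
  congr 1
  ext i j
  simp [one_apply, mul_comm]

theorem hasDerivAt_det_add_smul {𝕜 : Type*} [NontriviallyNormedField 𝕜] (A B : Matrix m m 𝕜)
    {t : 𝕜} (ht : IsUnit (A + t • B).det) :
    HasDerivAt (fun s : 𝕜 => (A + s • B).det)
      ((A + t • B).det * ((A + t • B)⁻¹ * B).trace) t := by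
  have hfactor : (fun s : 𝕜 => (A + s • B).det) =
      fun s => (A + t • B).det * (1 + (s - t) • ((A + t • B)⁻¹ * B)).det := by
    ext s
    rw [← det_mul, mul_add, mul_one, Matrix.mul_smul, mul_nonsing_inv_cancel_left _ _ ht]
    congr 1
    module
  rw [hfactor]
  refine (HasDerivAt.comp_sub_const (f := fun r => (1 + r • ((A + t • B)⁻¹ * B)).det) t t ?_)
    |>.const_mul _
  rw [sub_self]
  exact hasDerivAt_det_one_add_smul _

theorem hasDerivAt_log_det_add_smul (A B : Matrix m m ℝ) {t : ℝ} (ht : (A + t • B).det ≠ 0) :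
    HasDerivAt (fun s : ℝ => Real.log (A + s • B).det) ((A + t • B)⁻¹ * B).trace t := by
  have h := (hasDerivAt_det_add_smul A B (isUnit_iff_ne_zero.mpr ht)).log ht
  rwa [mul_div_cancel_left₀ _ ht] at h

theorem hasDerivAt_trace_inv_add_smul_mul (A B : Matrix m m ℝ) (hA : IsUnit A.det) :
    HasDerivAt (fun s : ℝ => ((A + s • B)⁻¹ * B).trace) (-(A⁻¹ * B * A⁻¹ * B).trace) 0 := by
  -- any normed-algebra structure on matrices will do: it only serves to differentiate inversion
  let := Matrix.linftyOpNormedRing (n := m) (α := ℝ)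
  let := Matrix.linftyOpNormedAlgebra (n := m) (α := ℝ) (R := ℝ)
  have hu : IsUnit A := (A.isUnit_iff_isUnit_det).mpr hA
  have hinv := hasFDerivAt_ringInverse (𝕜 := ℝ) hu.unit
  rw [IsUnit.unit_spec] at hinv
  have hline := ((hasDerivAt_id (0 : ℝ)).smul_const B).const_add A
  rw [one_smul] at hline
  let L := LinearMap.toContinuousLinearMap (traceLinearMap m ℝ ℝ ∘ₗ LinearMap.mulRight ℝ B)
  have h := L.hasFDerivAt.comp_hasDerivAt (0 : ℝ) (hinv.comp_hasDerivAt_of_eq 0 hline (by simp))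
  simp only [nonsing_inv_eq_ringInverse]
  refine h.congr_deriv ?_
  change (traceLinearMap m ℝ ℝ ∘ₗ LinearMap.mulRight ℝ B) _ = _
  simp [← nonsing_inv_eq_ringInverse]

theorem trace_perspective_hessian {K : Type*} [Field K] (A D : Matrix m m K) (hA : IsUnit A.det)
    {l : K} (hl : l ≠ 0) (dl : K) :
    l * ((l • A)⁻¹ * (dl • A + D) * (l • A)⁻¹ * (dl • A + D)).trace
      - 2 * dl * ((l • A)⁻¹ * (dl • A + D)).trace + Fintype.card m * dl ^ 2 / l
      = l⁻¹ * (A⁻¹ * D * A⁻¹ * D).trace := by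
  have hinv : (l • A)⁻¹ = l⁻¹ • A⁻¹ :=
    inv_eq_left_inv (by rw [smul_mul_smul_comm, inv_mul_cancel₀ hl, nonsing_inv_mul _ hA, one_smul])
  have hM : (l • A)⁻¹ * (dl • A + D) = l⁻¹ • (dl • 1 + A⁻¹ * D) := by
    rw [hinv, smul_mul_assoc, Matrix.mul_add, Matrix.mul_smul, nonsing_inv_mul _ hA]
  have hsq : (l • A)⁻¹ * (dl • A + D) * (l • A)⁻¹ * (dl • A + D)
      = ((l • A)⁻¹ * (dl • A + D)) * ((l • A)⁻¹ * (dl • A + D)) := by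
    simp only [Matrix.mul_assoc]
  rw [hsq, hM]
  simp only [smul_mul_smul_comm, Matrix.add_mul, Matrix.mul_add, Matrix.one_mul, Matrix.mul_one,
    Matrix.smul_mul, Matrix.mul_smul, trace_add, trace_smul, trace_one, smul_eq_mul,
    Matrix.mul_assoc]
  field_simp
  ring

theorem trace_perspective_hessian_eq {K : Type*} [Field K] (P X dX : Matrix m m K) {l : K}
    (hl : l ≠ 0) (hA : IsUnit (P + l⁻¹ • X).det) (dl : K) :
    l * ((l • P + X)⁻¹ * (dl • P + dX) * (l • P + X)⁻¹ * (dl • P + dX)).trace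
      - 2 * dl * ((l • P + X)⁻¹ * (dl • P + dX)).trace + Fintype.card m * dl ^ 2 / l
      = l⁻¹ * ((P + l⁻¹ • X)⁻¹ * dX * (P + l⁻¹ • X)⁻¹ * dX).trace
        - 2 * l⁻¹ ^ 2 * dl * ((P + l⁻¹ • X)⁻¹ * dX * (P + l⁻¹ • X)⁻¹ * X).trace
        + l⁻¹ ^ 3 * dl ^ 2 * ((P + l⁻¹ • X)⁻¹ * X * (P + l⁻¹ • X)⁻¹ * X).trace := by
  have hB₀ : l • P + X = l • (P + l⁻¹ • X) := by
    rw [smul_add, smul_smul, mul_inv_cancel₀ hl, one_smul]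
  have hB₁ : dl • P + dX = dl • (P + l⁻¹ • X) + (dX - (dl / l) • X) := by
    rw [div_eq_mul_inv]; module
  rw [hB₀, hB₁, trace_perspective_hessian _ _ hA hl, trace_mul_sub_smul_mul_sub_smul]
  ring

section Perspective

variable (B₀ B₁ : Matrix m m ℝ) (l dl c : ℝ)

/-- With `μ = l + s * dl` and `B = B₀ + s • B₁` this is `-(μ * (log det (μ⁻¹ • B) + c))`, with the
logarithm split so that it is differentiable wherever `μ ≠ 0` and `det B ≠ 0`. -/
noncomputable def perspectiveLogDet (s : ℝ) : ℝ :=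
  -((l + s * dl) * (Real.log (B₀ + s • B₁).det - Fintype.card m * Real.log (l + s * dl) + c))

noncomputable def perspectiveLogDetDeriv (s : ℝ) : ℝ :=
  -(dl * (Real.log (B₀ + s • B₁).det - Fintype.card m * Real.log (l + s * dl) + c)
    + (l + s * dl) * ((B₀ + s • B₁)⁻¹ * B₁).trace - Fintype.card m * dl)

variable {B₀ B₁ l dl}

theorem hasDerivAt_perspectiveLogDet {t : ℝ} (hμ : l + t * dl ≠ 0)
    (hB : (B₀ + t • B₁).det ≠ 0) :
    HasDerivAt (perspectiveLogDet B₀ B₁ l dl c) (perspectiveLogDetDeriv B₀ B₁ l dl c t) t := by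
  have hμ' : HasDerivAt (fun s => l + s * dl) dl t := (hasDerivAt_mul_const dl).const_add l
  have h := (hμ'.mul (((hasDerivAt_log_det_add_smul B₀ B₁ hB).sub
    ((hμ'.log hμ).const_mul (Fintype.card m : ℝ))).add_const c)).neg
  have hcancel : (l + t * dl) * (Fintype.card m * (dl / (l + t * dl))) = Fintype.card m * dl := by
    field_simp
  refine h.congr_deriv ?_
  simp only [perspectiveLogDetDeriv, Pi.sub_apply]
  linear_combination hcancel

theorem hasDerivAt_perspectiveLogDetDeriv (hl : l ≠ 0) (hB : IsUnit B₀.det) :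
    HasDerivAt (perspectiveLogDetDeriv B₀ B₁ l dl c)
      (l * (B₀⁻¹ * B₁ * B₀⁻¹ * B₁).trace - 2 * dl * (B₀⁻¹ * B₁).trace
        + Fintype.card m * dl ^ 2 / l) 0 := by
  have hμ' : HasDerivAt (fun s => l + s * dl) dl 0 := (hasDerivAt_mul_const dl).const_add l
  have hB' : (B₀ + (0 : ℝ) • B₁).det ≠ 0 := by simpa using hB.ne_zero
  have hl' : l + 0 * dl ≠ 0 := by simpa using hl
  have h := ((((hasDerivAt_log_det_add_smul B₀ B₁ hB').sub
    ((hμ'.log hl').const_mul (Fintype.card m : ℝ))).add_const c).const_mul dl).add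
    (hμ'.mul (hasDerivAt_trace_inv_add_smul_mul B₀ B₁ hB)) |>.sub_const (Fintype.card m * dl) |>.neg
  refine h.congr_deriv ?_
  simp only [zero_smul, add_zero, zero_mul]
  field_simp
  ring

end Perspective

theorem Fobj_line_eq_perspectiveLogDet {n : ℕ} (S X dX : Matrix (Fin n) (Fin n) ℝ)
    (δ l dl : ℝ) {t : ℝ} (hμ : l + t * dl ≠ 0)
    (hdet : ((l • S⁻¹ + X) + t • (dl • S⁻¹ + dX)).det ≠ 0) :
    Fobj S δ (l + t * dl) (X + t • dX)
      = perspectiveLogDet (l • S⁻¹ + X) (dl • S⁻¹ + dX) l dl (Real.log S.det - δ) t := by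
  rw [Fobj, perspectiveLogDet, add_inv_smul_eq_inv_smul_line _ _ _ hμ, det_smul, Fintype.card_fin,
    Real.log_mul (pow_ne_zero _ (inv_ne_zero hμ)) hdet, Real.log_pow, Real.log_inv]
  ring

theorem stmt13 {n : ℕ} (S : Matrix (Fin n) (Fin n) ℝ) (δ : ℝ)
    (l : ℝ) (hl : 0 < l) (X : Matrix (Fin n) (Fin n) ℝ) (hX : X.IsSymm)
    (hpd : (S⁻¹ + l⁻¹ • X).PosDef)
    (dl : ℝ) (dX : Matrix (Fin n) (Fin n) ℝ) (hdX : dX.IsSymm) :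
    ∃ ε > (0 : ℝ),
      (∀ t : ℝ, |t| < ε →
        0 < l + t * dl ∧ (S⁻¹ + (l + t * dl)⁻¹ • (X + t • dX)).PosDef) ∧
      ∃ g' : ℝ → ℝ,
        (∀ t : ℝ, |t| < ε →
          HasDerivAt (fun s => Fobj S δ (l + s * dl) (X + s • dX)) (g' t) t) ∧
        HasDerivAt g'
          (l⁻¹ * ((S⁻¹ + l⁻¹ • X)⁻¹ * dX * (S⁻¹ + l⁻¹ • X)⁻¹ * dX).trace
            - 2 * l⁻¹ ^ 2 * dl *
                ((S⁻¹ + l⁻¹ • X)⁻¹ * dX * (S⁻¹ + l⁻¹ • X)⁻¹ * X).trace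
            + l⁻¹ ^ 3 * dl ^ 2 *
                ((S⁻¹ + l⁻¹ • X)⁻¹ * X * (S⁻¹ + l⁻¹ • X)⁻¹ * X).trace) 0 := by
  have hB₀ : (l • S⁻¹ + X).PosDef := by
    have h := hpd.smul hl
    rwa [smul_add, smul_smul, mul_inv_cancel₀ hl.ne', one_smul] at h
  have hB₁ : (dl • S⁻¹ + dX).IsHermitian := by
    have hSinv : S⁻¹.IsSymm := by
      simpa using (isHermitian_iff_isSymm.mp hpd.isHermitian).sub (hX.smul l⁻¹)
    exact isHermitian_iff_isSymm.mpr ((hSinv.smul dl).add hdX)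
  obtain ⟨ε, hε, hball⟩ := Metric.eventually_nhds_iff_ball.mp
    ((continuousAt_const.eventually_lt (g := fun t : ℝ => l + t * dl) (by fun_prop)
      (by simpa using hl)).and (hB₀.eventually_add_smul hB₁))
  have habs : ∀ t : ℝ, |t| < ε ↔ t ∈ Metric.ball 0 ε := by simp
  refine ⟨ε, hε, fun t ht => ?_,
    perspectiveLogDetDeriv (l • S⁻¹ + X) (dl • S⁻¹ + dX) l dl (Real.log S.det - δ),
    fun t ht => ?_, ?_⟩
  · obtain ⟨hμ, hpos⟩ := hball t ((habs t).1 ht)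
    rw [add_inv_smul_eq_inv_smul_line _ _ _ hμ.ne']
    exact ⟨hμ, hpos.smul (inv_pos.mpr hμ)⟩
  · obtain ⟨hμ, hpos⟩ := hball t ((habs t).1 ht)
    refine (hasDerivAt_perspectiveLogDet _ hμ.ne' hpos.det_pos.ne').congr_of_eventuallyEq ?_
    filter_upwards [Metric.isOpen_ball.mem_nhds ((habs t).1 ht)] with s hs
    exact Fobj_line_eq_perspectiveLogDet S X dX δ l dl (hball s hs).1.ne' (hball s hs).2.det_pos.ne'
  · rw [← trace_perspective_hessian_eq _ _ _ hl.ne' (isUnit_iff_ne_zero.mpr hpd.det_pos.ne')]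
    exact hasDerivAt_perspectiveLogDetDeriv _ hl.ne' (isUnit_iff_ne_zero.mpr hB₀.det_pos.ne')
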